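/- For the cycle graph C_n: if n = 3 or n ≥ 5, then MEG(C_n) = 3, and MEG(C_4) = 4. -/

import Mathlib

open SimpleGraph

/-- Two vertices `x` and `y` monitor an edge `e` in `G`: there is a shortest path between
them, and `e` lies on every shortest path between `x` and `y`. -/
def Monitors {V : Type*} (G : SimpleGraph V) (x y : V) (e : Sym2 V) : Prop :=
  (∃ p : G.Walk x y, p.IsPath ∧ p.length = G.dist x y) ∧
    ∀ p : G.Walk x y, p.IsPath → p.length = G.dist x y → e ∈ p.edges

/-- `S` is a monitoring edge-geodetic set of `G`. -/
def IsMEGSet {V : Type*} (G : SimpleGraph V) (S : Set V) : Prop :=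
  ∀ e ∈ G.edgeSet, ∃ x ∈ S, ∃ y ∈ S, Monitors G x y e

/-- The minimum size of a monitoring edge-geodetic set of `G`. -/
noncomputable def megNum {V : Type*} (G : SimpleGraph V) : ℕ :=
  sInf {n | ∃ S : Set V, IsMEGSet G S ∧ S.ncard = n}

/-- The set of leaves (degree-1 vertices) of `G`. -/
def leaves {V : Type*} (G : SimpleGraph V) : Set V :=
  {v | (G.neighborSet v).ncard = 1}

/-!
Every path in `C_N` runs around the cycle in a single direction, so the only candidates for a
shortest `x`–`y` path are the two arcs between `x` and `y`. If one arc is shorter than `N / 2`,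
`x` and `y` monitor exactly its edges; if both have length `N / 2`, they are edge-disjoint
shortest paths and `x`, `y` monitor nothing. Cutting the cycle into three arcs shorter than `N / 2`,
which is possible unless `N = 4`, gives an MEG-set of size three. Conversely, the edges monitored
by two vertices lie on a single path, which has fewer than `N` edges. In `C_4` only adjacent
vertices monitor an edge, namely the one joining them, so every vertex must be chosen.
-/

open Finset

section Monitors

variable {V : Type*} {G : SimpleGraph V} {x y : V} {e : Sym2 V}

lemma Monitors.symm (h : Monitors G x y e) : Monitors G y x e := by
  obtain ⟨⟨p, hp, hlen⟩, hall⟩ := h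
  refine ⟨⟨p.reverse, hp.reverse, by rw [Walk.length_reverse, hlen, dist_comm]⟩,
    fun q hq hlen' => ?_⟩
  simpa using hall q.reverse hq.reverse (by rw [Walk.length_reverse, hlen', dist_comm])

lemma not_monitors_self (x : V) (e : Sym2 V) : ¬ Monitors G x x e := fun h => by
  simpa using h.2 Walk.nil Walk.IsPath.nil (by simp)

lemma IsMEGSet.monitors_of_subset_pair {S : Set V} (hS : IsMEGSet G S) (hxy : S ⊆ {x, y})
    (he : e ∈ G.edgeSet) : Monitors G x y e := by
  obtain ⟨a, ha, b, hb, hab⟩ := hS e he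
  rcases hxy ha with rfl | rfl <;> rcases hxy hb with rfl | rfl
  exacts [(not_monitors_self _ _ hab).elim, hab, hab.symm, (not_monitors_self _ _ hab).elim]

/-- All edges monitored by `x` and `y` lie on one shortest `x`–`y` path. -/
lemma IsMEGSet.card_edgeFinset_lt_of_subset_pair [Fintype V] [DecidableRel G.Adj] {S : Set V}
    (hS : IsMEGSet G S) (hxy : S ⊆ {x, y}) : #G.edgeFinset < Fintype.card V := by
  classical
  rcases G.edgeFinset.eq_empty_or_nonempty with hE | ⟨e, he⟩
  · rw [hE, Finset.card_empty]
    exact Fintype.card_pos_iff.mpr ⟨x⟩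
  obtain ⟨⟨p, hp, hlen⟩, -⟩ := hS.monitors_of_subset_pair hxy (mem_edgeFinset.mp he)
  have hsub : G.edgeFinset ⊆ p.edges.toFinset := fun e' he' =>
    List.mem_toFinset.mpr
      ((hS.monitors_of_subset_pair hxy (mem_edgeFinset.mp he')).2 p hp hlen)
  calc #G.edgeFinset ≤ p.edges.toFinset.card := Finset.card_le_card hsub
    _ ≤ p.edges.length := List.toFinset_card_le _
    _ = p.length := Walk.length_edges p
    _ < Fintype.card V := hp.length_lt

lemma IsMEGSet.three_le_ncard [Fintype V] [Nonempty V] [DecidableRel G.Adj]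
    (hG : Fintype.card V ≤ #G.edgeFinset) {S : Set V} (hS : IsMEGSet G S) : 3 ≤ S.ncard := by
  by_contra! hlt
  obtain ⟨x, y, hxy⟩ : ∃ x y : V, S ⊆ {x, y} := by
    rcases Nat.lt_succ_iff_lt_or_eq.mp hlt with h | h
    · obtain ⟨x, hx⟩ := (Set.ncard_le_one_iff_subset_singleton).mp (Nat.lt_succ_iff.mp h)
      exact ⟨x, x, by simpa using hx⟩
    · obtain ⟨x, y, -, rfl⟩ := Set.ncard_eq_two.mp h
      exact ⟨x, y, subset_rfl⟩
  exact (hS.card_edgeFinset_lt_of_subset_pair hxy).not_ge hG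

lemma megNum_eq_of_isMEGSet {k : ℕ} {S : Set V} (hS : IsMEGSet G S) (hk : S.ncard = k)
    (hmin : ∀ T, IsMEGSet G T → k ≤ T.ncard) : megNum G = k :=
  le_antisymm (Nat.sInf_le ⟨S, hS, hk⟩) <|
    le_csInf ⟨k, S, hS, hk⟩ fun _ ⟨T, hT, hTk⟩ => hTk ▸ hmin T hT

lemma monitors_of_adj (h : G.Adj x y) : Monitors G x y s(x, y) := by
  have hdist := dist_eq_one_iff_adj.mpr h
  refine ⟨⟨h.toWalk, by simp [h.ne], by simp [hdist]⟩, fun p _ hp => ?_⟩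
  rw [hdist] at hp
  cases p with
  | nil => simp at hp
  | cons _ q => cases q with
    | nil => simp
    | cons _ _ => simp at hp

lemma isMEGSet_univ : IsMEGSet G Set.univ := fun e he => by
  induction e using Sym2.ind with
  | _ x y => exact ⟨x, trivial, y, trivial, monitors_of_adj he⟩

end Monitors

namespace SimpleGraph.cycleGraph

open scoped Fin.NatCast Fin.CommRing

variable {n : ℕ} {x y : Fin (n + 3)} {e : Sym2 (Fin (n + 3))}

lemma adj_iff : (cycleGraph (n + 3)).Adj x y ↔ y = x + 1 ∨ x = y + 1 := by
  rw [cycleGraph_adj (n := n + 1), sub_eq_iff_eq_add', sub_eq_iff_eq_add', or_comm]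

lemma adj_add_one (x : Fin (n + 3)) : (cycleGraph (n + 3)).Adj x (x + 1) :=
  adj_iff.mpr (.inl rfl)

lemma exists_eq_edge (he : e ∈ (cycleGraph (n + 3)).edgeSet) :
    ∃ w, e = s(w, w + 1) := by
  induction e using Sym2.ind with
  | _ u v =>
    rcases adj_iff.mp ((cycleGraph _).mem_edgeSet.mp he) with rfl | rfl
    exacts [⟨u, rfl⟩, ⟨v, Sym2.eq_swap⟩]

lemma card_edgeFinset : #(cycleGraph (n + 3)).edgeFinset = n + 3 := by
  have := (cycleGraph (n + 3)).sum_degrees_eq_twice_card_edges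
  simp only [cycleGraph_degree_three_le, Finset.sum_const, Finset.card_univ, Fintype.card_fin,
    smul_eq_mul] at this
  omega

lemma eq_of_sym2_add_one_eq {a b : Fin (n + 3)} (h : s(a, a + 1) = s(b, b + 1)) : a = b := by
  rcases Sym2.eq_iff.mp h with ⟨rfl, -⟩ | ⟨rfl, h⟩
  · rfl
  · have h2 : (2 : Fin (n + 3)) ≠ 0 := by
      simp [Fin.ext_iff, Nat.mod_eq_of_lt (show 2 < n + 3 by omega)]
    exact absurd (by linear_combination h) h2

lemma val_sub_add_val_sub (hxy : x ≠ y) : (y - x).val + (x - y).val = n + 3 := by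
  rcases lt_or_gt_of_ne hxy with h | h <;>
  · rw [Fin.sub_val_of_le h.le, Fin.coe_sub_iff_lt.mpr h]
    omega

def IsAscending (p : (cycleGraph (n + 3)).Walk x y) : Prop :=
  ∀ d ∈ p.darts, d.snd = d.fst + 1

def arc (x : Fin (n + 3)) (d : ℕ) : Set (Sym2 (Fin (n + 3))) :=
  {e | ∃ i < d, e = s(x + i, x + i + 1)}

section IsAscending

variable {z : Fin (n + 3)} {h : (cycleGraph (n + 3)).Adj x z} {q : (cycleGraph (n + 3)).Walk z y}

@[simp]
lemma isAscending_nil : IsAscending (Walk.nil : (cycleGraph (n + 3)).Walk x x) := by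
  simp [IsAscending]

@[simp]
lemma isAscending_cons : IsAscending (Walk.cons h q) ↔ z = x + 1 ∧ IsAscending q := by
  simp [IsAscending]

@[simp]
lemma isAscending_reverse_cons :
    IsAscending (Walk.cons h q).reverse ↔ IsAscending q.reverse ∧ x = z + 1 := by
  simp [IsAscending, or_imp, forall_and]

lemma exists_isAscending_of_eq_add (d : ℕ) (hy : y = x + d) :
    ∃ p : (cycleGraph (n + 3)).Walk x y, IsAscending p ∧ p.length = d := by
  induction d generalizing x with
  | zero =>
    obtain rfl : y = x := by simpa using hy
    exact ⟨.nil, by simp⟩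
  | succ d ih =>
    obtain ⟨q, hq, hlen⟩ := ih (x := x + 1) (by rw [hy]; push_cast; ring)
    exact ⟨.cons (adj_add_one x) q, by simp [hq, hlen]⟩

lemma exists_isAscending (x y : Fin (n + 3)) :
    ∃ p : (cycleGraph (n + 3)).Walk x y, IsAscending p ∧ p.length = (y - x).val :=
  exists_isAscending_of_eq_add _ (by simp)

lemma IsAscending.eq_add_length {p : (cycleGraph (n + 3)).Walk x y} (hp : IsAscending p) :
    y = x + p.length := by
  induction p with
  | nil => simp
  | cons h q ih =>
    obtain ⟨rfl, hq⟩ := isAscending_cons.mp hp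
    rw [Walk.length_cons, Nat.cast_succ, add_comm _ 1, ← add_assoc]
    exact ih hq

lemma IsAscending.mem_edges_iff {p : (cycleGraph (n + 3)).Walk x y} (hp : IsAscending p) :
    e ∈ p.edges ↔ e ∈ arc x p.length := by
  induction p with
  | nil => simp [arc]
  | @cons x z y h q ih =>
    obtain ⟨rfl, hq⟩ := isAscending_cons.mp hp
    have hshift (i : ℕ) : x + ((i + 1 : ℕ) : Fin (n + 3)) = x + 1 + i := by push_cast; ring
    simp only [Walk.edges_cons, List.mem_cons, ih hq, arc, Set.mem_ofPred_eq, Walk.length_cons,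
      Nat.exists_lt_succ_left, hshift, Nat.cast_zero, add_zero]

lemma IsAscending.length_eq {p : (cycleGraph (n + 3)).Walk x y} (hp : IsAscending p)
    (hpath : p.IsPath) : p.length = (y - x).val := by
  have hlt : p.length < n + 3 := by simpa using hpath.length_lt
  rw [sub_eq_iff_eq_add'.mpr hp.eq_add_length, Fin.val_cast_of_lt hlt]

lemma _root_.SimpleGraph.Walk.IsPath.isAscending_or {p : (cycleGraph (n + 3)).Walk x y}
    (hp : p.IsPath) : IsAscending p ∨ IsAscending p.reverse := by
  induction p with
  | nil => simp
  | @cons x z y h q ih =>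
    rw [Walk.cons_isPath_iff] at hp
    obtain ⟨hq, hx⟩ := hp
    rw [isAscending_cons, isAscending_reverse_cons]
    rcases adj_iff.mp h with hz | hz <;> rcases ih hq with hq' | hq'
    · exact .inl ⟨hz, hq'⟩
    · cases q with
      | nil => simp [hz]
      | @cons _ w _ h' q' =>
        obtain ⟨-, hzw⟩ := isAscending_reverse_cons.mp hq'
        obtain rfl : w = x := add_right_cancel (hzw.symm.trans hz)
        simp at hx
    · cases q with
      | nil => simp [hz]
      | @cons _ w _ h' q' =>
        obtain ⟨hw, -⟩ := isAscending_cons.mp hq'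
        obtain rfl : w = x := hw.trans hz.symm
        simp at hx
    · exact .inr ⟨hq', hz⟩

end IsAscending

lemma dist_eq_min (x y : Fin (n + 3)) :
    (cycleGraph (n + 3)).dist x y = min (y - x).val (x - y).val := by
  obtain ⟨p, -, hp⟩ := exists_isAscending x y
  obtain ⟨q, -, hq⟩ := exists_isAscending y x
  refine le_antisymm (le_min (hp ▸ dist_le p) (by simpa [hq] using dist_le q.reverse)) ?_
  obtain ⟨r, hr, hlen⟩ := cycleGraph_connected.exists_path_of_dist x y
  rw [← hlen]
  rcases hr.isAscending_or with h | h
  · exact (min_le_left _ _).trans_eq (h.length_eq hr).symm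
  · exact (min_le_right _ _).trans_eq (by simpa using (h.length_eq hr.reverse).symm)

lemma monitors_of_lt (hlt : (y - x).val < (x - y).val) (he : e ∈ arc x (y - x).val) :
    Monitors (cycleGraph (n + 3)) x y e := by
  have hdist : (cycleGraph (n + 3)).dist x y = (y - x).val := by
    rw [dist_eq_min, min_eq_left hlt.le]
  obtain ⟨p, -, hlen⟩ := exists_isAscending x y
  rw [← hdist] at hlen
  refine ⟨⟨p, p.isPath_of_length_eq_dist hlen, hlen⟩, fun q hq hqlen => ?_⟩
  rw [hdist] at hqlen
  rcases hq.isAscending_or with h | h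
  · rwa [h.mem_edges_iff, hqlen]
  · have := h.length_eq hq.reverse
    rw [Walk.length_reverse] at this
    omega

lemma disjoint_arc_of_val_sub_eq (h : (y - x).val = (x - y).val) :
    Disjoint (arc x (y - x).val) (arc y (x - y).val) := by
  rw [Set.disjoint_left]
  rintro e ⟨i, hi, rfl⟩ ⟨j, hj, he⟩
  have hsum := val_sub_add_val_sub (show x ≠ y by rintro rfl; simp at hi)
  have hij : x + i = y + j := eq_of_sym2_add_one_eq he
  rw [show y = x + ((y - x).val : ℕ) by simp, add_assoc, ← Nat.cast_add] at hij
  have := congrArg Fin.val (add_left_cancel hij)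
  rw [Fin.val_cast_of_lt (by omega), Fin.val_cast_of_lt (by omega)] at this
  omega

lemma lt_and_mem_arc_of_monitors (h : Monitors (cycleGraph (n + 3)) x y e)
    (hle : (y - x).val ≤ (x - y).val) : (y - x).val < (x - y).val ∧ e ∈ arc x (y - x).val := by
  have hdist : (cycleGraph (n + 3)).dist x y = (y - x).val := by
    rw [dist_eq_min, min_eq_left hle]
  obtain ⟨p, hp, hlen⟩ := exists_isAscending x y
  have hpe : e ∈ arc x (y - x).val := by
    rw [← hlen, ← hp.mem_edges_iff]
    exact h.2 p (p.isPath_of_length_eq_dist (hlen.trans hdist.symm)) (hlen.trans hdist.symm)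
  refine ⟨lt_of_le_of_ne hle fun heq => ?_, hpe⟩
  obtain ⟨q, hq, hqlen⟩ := exists_isAscending y x
  have hqlen' : q.reverse.length = (cycleGraph (n + 3)).dist x y := by simp [hqlen, hdist, heq]
  have hqe := h.2 q.reverse (q.reverse.isPath_of_length_eq_dist hqlen') hqlen'
  rw [Walk.edges_reverse, List.mem_reverse, hq.mem_edges_iff, hqlen] at hqe
  exact Set.disjoint_left.mp (disjoint_arc_of_val_sub_eq heq) hpe hqe

lemma monitors_of_val_le {w : Fin (n + 3)} {d : ℕ} (hd : 2 * d < n + 3) (hxw : x.val ≤ w.val)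
    (hw : w.val < x.val + d) : Monitors (cycleGraph (n + 3)) x (x + d) s(w, w + 1) := by
  have hval : (x + d - x).val = d := by rw [add_sub_cancel_left, Fin.val_cast_of_lt (by omega)]
  have hsum := val_sub_add_val_sub (x := x) (y := x + d) fun h => by
    rw [← h, sub_self, Fin.val_zero] at hval
    omega
  refine monitors_of_lt (by omega) ⟨(w - x).val, ?_, by simp⟩
  rw [hval, Fin.sub_val_of_le hxw]
  omega

lemma isMEGSet_of_add_add {d₁ d₂ d₃ : ℕ} (hsum : d₁ + d₂ + d₃ = n + 3) (h₁ : 2 * d₁ < n + 3)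
    (h₂ : 2 * d₂ < n + 3) (h₃ : 2 * d₃ < n + 3) :
    IsMEGSet (cycleGraph (n + 3)) {0, (d₁ : Fin (n + 3)), ((d₁ + d₂ : ℕ) : Fin (n + 3))} := by
  intro e he
  obtain ⟨w, rfl⟩ := exists_eq_edge he
  have hw := w.isLt
  rcases lt_or_ge w.val d₁ with hw₁ | hw₁
  · refine ⟨0, by simp, d₁, by simp, ?_⟩
    simpa using monitors_of_val_le (x := 0) h₁ (by simp) (by simpa using hw₁)
  rcases lt_or_ge w.val (d₁ + d₂) with hw₂ | hw₂
  · refine ⟨d₁, by simp, (d₁ + d₂ : ℕ), by simp, ?_⟩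
    have hval : (d₁ : Fin (n + 3)).val = d₁ := Fin.val_cast_of_lt (by omega)
    have := monitors_of_val_le (x := d₁) (w := w) h₂ (by omega) (by omega)
    rwa [← Nat.cast_add] at this
  · refine ⟨(d₁ + d₂ : ℕ), by simp, 0, by simp, ?_⟩
    have hval : ((d₁ + d₂ : ℕ) : Fin (n + 3)).val = d₁ + d₂ := Fin.val_cast_of_lt (by omega)
    have := monitors_of_val_le (x := (d₁ + d₂ : ℕ)) (w := w) h₃ (by omega) (by omega)
    rwa [← Nat.cast_add, hsum, Fin.natCast_self] at this

theorem megNum_eq_three (hn : n ≠ 1) : megNum (cycleGraph (n + 3)) = 3 := by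
  have hS := isMEGSet_of_add_add (n := n) (d₁ := (n + 5) / 3) (d₂ := (n + 4) / 3)
    (d₃ := (n + 3) / 3) (by omega) (by omega) (by omega) (by omega)
  refine megNum_eq_of_isMEGSet hS ?_ fun T hT => hT.three_le_ncard (by simp [card_edgeFinset])
  have hcast_inj {a b : ℕ} (ha : a < n + 3) (hb : b < n + 3) (hab : a ≠ b) :
      (a : Fin (n + 3)) ≠ b := by
    rw [Ne, Fin.ext_iff, Fin.val_cast_of_lt ha, Fin.val_cast_of_lt hb]
    exact hab
  rw [Set.ncard_eq_three]
  refine ⟨_, _, _, ?_, ?_, hcast_inj (by omega) (by omega) (by omega), rfl⟩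
  · simpa using hcast_inj (a := 0) (by omega) (by omega) (by omega)
  · simpa using hcast_inj (a := 0) (b := (n + 5) / 3 + (n + 4) / 3) (by omega) (by omega)
      (by omega)

lemma eq_or_eq_of_monitors_of_mem {a b v : Fin 4} {e : Sym2 (Fin 4)}
    (hm : Monitors (cycleGraph 4) a b e) (hv : v ∈ e) : v = a ∨ v = b := by
  wlog hle : (b - a).val ≤ (a - b).val generalizing a b
  · exact (this hm.symm (by omega)).symm
  obtain ⟨hlt, i, hi, rfl⟩ := lt_and_mem_arc_of_monitors (n := 1) hm hle
  have hsum := val_sub_add_val_sub (n := 1) (show a ≠ b by rintro rfl; simp at hlt)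
  have hval : (b - a).val = 1 := by
    generalize (b - a).val = k at *
    omega
  have hba : b - a = 1 := Fin.ext hval
  obtain rfl : i = 0 := by omega
  simpa [sub_eq_iff_eq_add'.mp hba] using hv

theorem megNum_four : megNum (cycleGraph 4) = 4 := by
  refine megNum_eq_of_isMEGSet isMEGSet_univ (by simp) fun S hS => ?_
  by_contra! hlt
  obtain ⟨v, hv⟩ : ∃ v, v ∉ S := by
    by_contra! hall
    simp [Set.eq_univ_of_forall hall] at hlt
  obtain ⟨a, ha, b, hb, hm⟩ := hS s(v, v + 1) (adj_add_one (n := 1) v)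
  rcases eq_or_eq_of_monitors_of_mem hm (Sym2.mem_mk_left v (v + 1)) with rfl | rfl <;>
    contradiction

end SimpleGraph.cycleGraph

theorem cycleGraph_MEG (n : ℕ) (hn : n = 3 ∨ 5 ≤ n) :
    megNum (cycleGraph n) = 3 ∧ megNum (cycleGraph 4) = 4 := by
  obtain ⟨m, rfl⟩ : ∃ m, n = m + 3 := ⟨n - 3, by omega⟩
  exact ⟨cycleGraph.megNum_eq_three (by omega), cycleGraph.megNum_four⟩
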